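/- arXiv:2110.05786 — 2 statements merged into one kernel-verified Lean document; each statement's English description precedes it below -/
import Mathlib

section
/- The density h(x) = 1/x is invariant under the Rényi transfer operator: for every x ∈ (0,1), ∑_{n=1}^{∞} (1/(n+x)^2) · 1/(1 - 1/(n+x)) = 1/x. -/
/-!
Since `1 - 1/(y+1) = y/(y+1)`, the `n`-th term equals `1/(y(y+1)) = 1/y - 1/(y+1)` with `y = n + x`,
so the series telescopes to `1/x`.
-/

open Filter Topology

theorem Antitone.hasSum_sub_succ {f : ℕ → ℝ} (hf : Antitone f) {l : ℝ}
    (hl : Tendsto f atTop (𝓝 l)) : HasSum (fun n => f n - f (n + 1)) (f 0 - l) := by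
  rw [hasSum_iff_tendsto_nat_of_nonneg fun n => sub_nonneg.2 (hf n.le_succ)]
  simp_rw [Finset.sum_range_sub']
  exact tendsto_const_nhds.sub hl

theorem one_div_add_one_sq_mul_one_div_one_sub_one_div {y : ℝ} (hy : y ≠ 0) (hy₁ : y + 1 ≠ 0) :
    1 / (y + 1) ^ 2 * (1 / (1 - 1 / (y + 1))) = 1 / y - 1 / (y + 1) := by
  have hsub : 1 - 1 / (y + 1) = y / (y + 1) := by field_simp; ring
  rw [hsub]
  field_simp
  ring

/-- The density `1/x` is invariant under the Rényi transfer operator: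
`∑_{n≥1} (1/(n+x)²) · 1/(1 − 1/(n+x)) = 1/x` for `x ∈ (0,1)`. -/
theorem renyi_density_invariant (x : ℝ) (hx : x ∈ Set.Ioo (0 : ℝ) 1) :
    ∑' n : ℕ, (1 / ((n + 1 : ℝ) + x) ^ 2) * (1 / (1 - 1 / ((n + 1 : ℝ) + x)))
      = 1 / x := by
  have hx0 : 0 < x := hx.1
  have hanti : Antitone fun n : ℕ => 1 / ((n : ℝ) + x) := fun m n hmn =>
    one_div_le_one_div_of_le (by positivity) (by gcongr)
  have hlim : Tendsto (fun n : ℕ => 1 / ((n : ℝ) + x)) atTop (𝓝 0) := by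
    simp_rw [one_div]
    exact (tendsto_atTop_add_const_right _ x tendsto_natCast_atTop_atTop).inv_tendsto_atTop
  have htel := hanti.hasSum_sub_succ hlim
  simp only [Nat.cast_zero, zero_add, sub_zero, Nat.cast_succ] at htel
  refine (htel.congr_fun fun n => ?_).tsum_eq
  rw [add_right_comm]
  exact one_div_add_one_sq_mul_one_div_one_sub_one_div (by positivity) (by positivity)
end

section
/- Let p ∈ (0,1) and define the operator B_p on bounded functions on [0,1] by (B_p f)(x) = p/(1+x)² · f(1/(1+x)) + (1−p)/(1+x)² · f(x/(1+x)). Then for any f with ‖f‖_∞ = sup_{x∈[0,1]} |f(x)|, one has ‖B_p² f‖_∞ ≤ (1 − 3p/4) ‖f‖_∞. -/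
/-- The operator `B_p f(x) = p/(1+x)² f(1/(1+x)) + (1−p)/(1+x)² f(x/(1+x))`. -/
noncomputable def Bp (p : ℝ) (f : ℝ → ℝ) : ℝ → ℝ := fun x =>
  p / (1 + x) ^ 2 * f (1 / (1 + x)) + (1 - p) / (1 + x) ^ 2 * f (x / (1 + x))

/-- `‖B_p² f‖_∞ ≤ (1 − 3p/4) ‖f‖_∞` on `[0,1]`: if `M` bounds `|f|` on `[0,1]`,
then `(1 − 3p/4)·M` bounds `|B_p(B_p f)|` on `[0,1]`. -/
theorem Bp_sq_contraction (p : ℝ) (hp : p ∈ Set.Ioo (0 : ℝ) 1)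
    (f : ℝ → ℝ) (M : ℝ) (hf : ∀ x ∈ Set.Icc (0 : ℝ) 1, |f x| ≤ M) :
    ∀ x ∈ Set.Icc (0 : ℝ) 1, |Bp p (Bp p f) x| ≤ (1 - 3 * p / 4) * M := by
  obtain ⟨hp0, hp1⟩ := hp
  have hM : 0 ≤ M := le_trans (abs_nonneg _) (hf 0 ⟨le_refl _, zero_le_one⟩)
  have key : ∀ y ∈ Set.Icc (0:ℝ) 1, |Bp p f y| ≤ M / (1 + y) ^ 2 := by
    rintro y ⟨hy0, hy1⟩
    have h1 : (0:ℝ) < 1 + y := by linarith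
    have h2 : (0:ℝ) < (1 + y) ^ 2 := by positivity
    have ha : 1 / (1 + y) ∈ Set.Icc (0:ℝ) 1 :=
      ⟨by positivity, by rw [div_le_one h1]; linarith⟩
    have hb : y / (1 + y) ∈ Set.Icc (0:ℝ) 1 :=
      ⟨by positivity, by rw [div_le_one h1]; linarith⟩
    have hfa := hf _ ha
    have hfb := hf _ hb
    have e1 : |p / (1 + y) ^ 2| = p / (1 + y) ^ 2 := abs_of_pos (by positivity)
    have e2 : |(1 - p) / (1 + y) ^ 2| = (1 - p) / (1 + y) ^ 2 :=
      abs_of_nonneg (div_nonneg (by linarith) h2.le)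
    calc |Bp p f y|
        ≤ |p / (1 + y) ^ 2 * f (1 / (1 + y))| +
          |(1 - p) / (1 + y) ^ 2 * f (y / (1 + y))| := abs_add_le _ _
      _ = p / (1 + y) ^ 2 * |f (1 / (1 + y))| +
          (1 - p) / (1 + y) ^ 2 * |f (y / (1 + y))| := by
            rw [abs_mul, abs_mul, e1, e2]
      _ ≤ p / (1 + y) ^ 2 * M + (1 - p) / (1 + y) ^ 2 * M := by
            gcongr <;> first | positivity | exact div_nonneg (by linarith) h2.le
      _ = M / (1 + y) ^ 2 := by ring
  rintro x ⟨hx0, hx1⟩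
  have h1 : (0:ℝ) < 1 + x := by linarith
  have h1' : (1:ℝ) + x ≠ 0 := ne_of_gt h1
  have ha : 1 / (1 + x) ∈ Set.Icc (0:ℝ) 1 :=
    ⟨by positivity, by rw [div_le_one h1]; linarith⟩
  have hb : x / (1 + x) ∈ Set.Icc (0:ℝ) 1 :=
    ⟨by positivity, by rw [div_le_one h1]; linarith⟩
  have k1 := key _ ha
  have k2 := key _ hb
  have e1 : |p / (1 + x) ^ 2| = p / (1 + x) ^ 2 := abs_of_pos (by positivity)
  have e2 : |(1 - p) / (1 + x) ^ 2| = (1 - p) / (1 + x) ^ 2 :=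
    abs_of_nonneg (div_nonneg (by linarith) (by positivity))
  have h2x : (2:ℝ) + x ≠ 0 := by positivity
  have h12x : (1:ℝ) + 2 * x ≠ 0 := by positivity
  have A : p / (1 + x) ^ 2 * (M / (1 + 1 / (1 + x)) ^ 2) = p * M / (2 + x) ^ 2 := by
    have h : 1 + 1 / (1 + x) = (2 + x) / (1 + x) := by field_simp; ring
    rw [h]
    field_simp
  have B : (1 - p) / (1 + x) ^ 2 * (M / (1 + x / (1 + x)) ^ 2)
      = (1 - p) * M / (1 + 2 * x) ^ 2 := by
    have h : 1 + x / (1 + x) = (1 + 2 * x) / (1 + x) := by field_simp; ring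
    rw [h]
    field_simp
  calc |Bp p (Bp p f) x|
      ≤ |p / (1 + x) ^ 2 * Bp p f (1 / (1 + x))| +
        |(1 - p) / (1 + x) ^ 2 * Bp p f (x / (1 + x))| := abs_add_le _ _
    _ = p / (1 + x) ^ 2 * |Bp p f (1 / (1 + x))| +
        (1 - p) / (1 + x) ^ 2 * |Bp p f (x / (1 + x))| := by
          rw [abs_mul, abs_mul, e1, e2]
    _ ≤ p / (1 + x) ^ 2 * (M / (1 + 1 / (1 + x)) ^ 2) +
        (1 - p) / (1 + x) ^ 2 * (M / (1 + x / (1 + x)) ^ 2) := by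
          gcongr <;> first
            | positivity
            | exact div_nonneg (by linarith) (by positivity)
    _ = p * M / (2 + x) ^ 2 + (1 - p) * M / (1 + 2 * x) ^ 2 := by rw [A, B]
    _ ≤ p * M / 4 + (1 - p) * M / 1 := by
          gcongr <;> first
            | positivity
            | nlinarith
            | exact mul_nonneg (by linarith) hM
    _ = (1 - 3 * p / 4) * M := by ring
end
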